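/- Let k ≥ 2, L > 0, A > 1, M > 0, and let α₀, a₂, …, a_k, b₁ be nonnegative reals and a₁ > 0. Define ψ(x) = α₀ + Σ_{i=1}^k a_i x_i² + b₁ x₁ on ℝ^k and Ω = [-L,L]^k. Assume: (i) 4α₀a₁ = b₁²; (ii) -2a₁L + b₁ ≥ 2A √((1/(4a₁))(-2a₁L + b₁)² + Σ_{i=2}^k a_i L²) > 0; (iii) √(a₁)√(a_i) ≤ 2M for all 2 ≤ i ≤ k. Then ψ is strictly positive on Ω, φ₀ = √ψ is well defined and C^∞ on an open neighbourhood of Ω, and for all x ∈ Ω: |∂φ₀/∂x₁(x)| ≥ A, and |∂φ₀/∂x₁(x) · ∂φ₀/∂x_i(x)| ≤ M for all 2 ≤ i ≤ k. -/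

import Mathlib

open Finset Set
set_option maxHeartbeats 1000000


lemma aux_sq (A t₀ Q : ℝ) (hQ0 : 0 ≤ Q) (h1 : t₀ ≥ 2 * A * Real.sqrt Q)
    (h1' : 0 < 2 * A * Real.sqrt Q) : 4 * A ^ 2 * Q ≤ t₀ ^ 2 := by
  nlinarith [Real.sq_sqrt hQ0, Real.sqrt_nonneg Q]

lemma aux_haA (A t₀ SL a1 : ℝ) (hc1 : A ^ 2 * t₀ ^ 2 + 4 * a1 * A ^ 2 * SL ≤ a1 * t₀ ^ 2)
    (hSL0 : 0 ≤ SL) (ht₀ : 0 < t₀) (ha1 : 0 < a1) (hA : 0 < A) : A ^ 2 ≤ a1 := by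
  nlinarith [mul_nonneg (mul_nonneg (by linarith : (0:ℝ) ≤ 4 * a1) (sq_nonneg A)) hSL0,
    mul_pos ht₀ ht₀]

lemma aux_pos (P S t t₀ a1 : ℝ) (hPt : P * (4 * a1) = t ^ 2 + 4 * a1 * S)
    (htx : t₀ ≤ t) (ht₀ : 0 < t₀) (hS0 : 0 ≤ S) (ha1 : 0 < a1) : 0 < P := by
  nlinarith [mul_pos (lt_of_lt_of_le ht₀ htx) (lt_of_lt_of_le ht₀ htx),
    mul_nonneg (by linarith : (0:ℝ) ≤ 4 * a1) hS0]

lemma aux_ABase (A t t₀ P S SL a1 : ℝ)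
    (hc1 : A ^ 2 * t₀ ^ 2 + 4 * a1 * A ^ 2 * SL ≤ a1 * t₀ ^ 2)
    (haA : A ^ 2 ≤ a1) (ht2 : t₀ ^ 2 ≤ t ^ 2) (hSx : S ≤ SL)
    (hPt : P * (4 * a1) = t ^ 2 + 4 * a1 * S) (ha1 : 0 < a1) (hA : 0 < A) :
    4 * A ^ 2 * P ≤ t ^ 2 := by
  have h2 : 4 * A ^ 2 * (P * (4 * a1)) ≤ t ^ 2 * (4 * a1) := by
    rw [hPt]
    nlinarith [mul_nonneg (sub_nonneg.2 haA) (sub_nonneg.2 ht2),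
      mul_nonneg (mul_nonneg (by linarith : (0:ℝ) ≤ 4 * a1) (sq_nonneg A)) (sub_nonneg.2 hSx)]
  nlinarith [h2, ha1]

lemma aux_2As (A s t P : ℝ) (hABase : 4 * A ^ 2 * P ≤ t ^ 2) (hs2 : s ^ 2 = P)
    (hs0 : 0 < s) (ht : 0 < t) (hA : 0 < A) : 2 * A * s ≤ t := by
  nlinarith [mul_pos (mul_pos (by linarith : (0:ℝ) < 2 * A) hs0) ht]

lemma aux_prod (p q t P S X M a1 ai : ℝ)
    (hp2 : p ^ 2 = a1) (hq2 : q ^ 2 = ai) (hppos : 0 < p) (hq0 : 0 ≤ q)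
    (hpq : p * q ≤ 2 * M) (hPt : P * (4 * a1) = t ^ 2 + 4 * a1 * S)
    (hSxi : ai * X ^ 2 ≤ S) (hX0 : 0 ≤ X) (hP0 : 0 < P) (ht : 0 < t) :
    ai * (t * X) ≤ 2 * M * P := by
  have e1 : 4 * p ^ 2 * P = t ^ 2 + 4 * p ^ 2 * S := by
    linear_combination hPt + (4 * P - 4 * S) * hp2
  have e2 : q ^ 2 * X ^ 2 ≤ S := by rw [hq2]; exact hSxi
  have e3 : 4 * p ^ 2 * (q ^ 2 * X ^ 2) ≤ 4 * p ^ 2 * S :=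
    mul_le_mul_of_nonneg_left e2 (by positivity)
  have step1 : 4 * p * (q * t * X) ≤ 4 * p ^ 2 * P := by
    nlinarith [sq_nonneg (t - 2 * p * q * X), e1, e3]
  have step2 : q * t * X ≤ p * P := by nlinarith [step1, hppos]
  have step3 := mul_le_mul_of_nonneg_left step2 hq0
  have e4 : q * (q * t * X) = ai * (t * X) := by linear_combination (t * X) * hq2
  nlinarith [step3, e4, mul_nonneg (sub_nonneg.2 hpq) hP0.le]

lemma fderiv_sqrt_quadratic {k : ℕ} (α₀ b₁ : ℝ) (a : Fin k → ℝ) (e0 : Fin k)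
    (x : Fin k → ℝ) (hx : 0 < α₀ + (∑ i, a i * x i ^ 2) + b₁ * x e0) (j : Fin k) :
    fderiv ℝ (fun y => Real.sqrt (α₀ + (∑ i, a i * y i ^ 2) + b₁ * y e0)) x (Pi.single j 1)
      = (2 * a j * x j + (if j = e0 then b₁ else 0)) /
        (2 * Real.sqrt (α₀ + (∑ i, a i * x i ^ 2) + b₁ * x e0)) := by
  have hproj : ∀ i : Fin k, HasFDerivAt (fun y : Fin k → ℝ => y i)
      (ContinuousLinearMap.proj i : (Fin k → ℝ) →L[ℝ] ℝ) x := by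
    intro i; exact (ContinuousLinearMap.proj (R := ℝ) (φ := fun _ : Fin k => ℝ) i).hasFDerivAt
  have h1 : ∀ i : Fin k, HasFDerivAt (fun y : Fin k → ℝ => a i * y i ^ 2)
      ((2 * a i * x i) • (ContinuousLinearMap.proj i : (Fin k → ℝ) →L[ℝ] ℝ)) x := by
    intro i
    have h := ((hproj i).fun_mul (hproj i)).const_mul (a i)
    have hfun : (fun y : Fin k → ℝ => a i * y i ^ 2) = fun y => a i * (y i * y i) := by
      funext y; ring
    rw [hfun]
    refine h.congr_fderiv ?_
    ext v
    simp [smul_smul]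
    ring
  have hs := HasFDerivAt.fun_sum (fun i (_ : i ∈ Finset.univ) => h1 i)
  have hb : HasFDerivAt (fun y : Fin k → ℝ => b₁ * y e0)
      (b₁ • (ContinuousLinearMap.proj e0 : (Fin k → ℝ) →L[ℝ] ℝ)) x := (hproj e0).const_mul b₁
  have hd := ((hasFDerivAt_const α₀ x).fun_add hs).fun_add hb
  have hsq := (Real.hasDerivAt_sqrt hx.ne').comp_hasFDerivAt x hd
  rw [Function.comp_def] at hsq
  rw [hsq.fderiv]
  simp only [ContinuousLinearMap.coe_smul', Pi.smul_apply, ContinuousLinearMap.add_apply,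
    ContinuousLinearMap.coe_sum', Finset.sum_apply, ContinuousLinearMap.smul_apply,
    ContinuousLinearMap.proj_apply, ContinuousLinearMap.zero_apply, Pi.single_apply,
    smul_eq_mul, mul_ite, mul_one, mul_zero, Finset.sum_ite_eq', Finset.mem_univ, if_true]
  have hs0 : Real.sqrt (α₀ + (∑ i, a i * x i ^ 2) + b₁ * x e0) > 0 := Real.sqrt_pos.2 hx
  by_cases h : j = e0
  · subst h
    rw [if_pos rfl]
    field_simp
    ring
  · rw [if_neg h, if_neg (fun he => h he.symm)]
    field_simp
    ring

/-- Lemma 1 of the paper: under conditions (i)–(iii) on the coefficients of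
`ψ(x) = α₀ + Σ aᵢ xᵢ² + b₁ x₁`, the function `ψ` is positive on `Ω = [-L,L]^k`, `φ₀ = √ψ` is
well defined and `C^∞` on an open neighbourhood of `Ω`, and on `Ω` one has `|∂φ₀/∂x₁| ≥ A`
and `|∂φ₀/∂x₁ · ∂φ₀/∂xᵢ| ≤ M` for `2 ≤ i ≤ k` (0-based indices). -/
theorem quadratic_example (k : ℕ) (hk : 2 ≤ k) (L A M : ℝ)
    (hL : 0 < L) (hA : 1 < A) (hM : 0 < M)
    (α₀ b₁ : ℝ) (a : Fin k → ℝ)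
    (hα₀ : 0 ≤ α₀) (hb₁ : 0 ≤ b₁)
    (ha1 : 0 < a ⟨0, by omega⟩) (hai : ∀ i : Fin k, i ≠ ⟨0, by omega⟩ → 0 ≤ a i)
    (ψ : (Fin k → ℝ) → ℝ)
    (hψ : ψ = fun x => α₀ + (∑ i, a i * x i ^ 2) + b₁ * x ⟨0, by omega⟩)
    (hrel0 : 4 * α₀ * a ⟨0, by omega⟩ = b₁ ^ 2)
    (hrel1 : -2 * a ⟨0, by omega⟩ * L + b₁ ≥
      2 * A * Real.sqrt (1 / (4 * a ⟨0, by omega⟩) * (-2 * a ⟨0, by omega⟩ * L + b₁) ^ 2 +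
        ∑ i ∈ Finset.univ.erase (⟨0, by omega⟩ : Fin k), a i * L ^ 2))
    (hrel1' : 0 <
      2 * A * Real.sqrt (1 / (4 * a ⟨0, by omega⟩) * (-2 * a ⟨0, by omega⟩ * L + b₁) ^ 2 +
        ∑ i ∈ Finset.univ.erase (⟨0, by omega⟩ : Fin k), a i * L ^ 2))
    (hrel2 : ∀ i : Fin k, i ≠ ⟨0, by omega⟩ →
      Real.sqrt (a ⟨0, by omega⟩) * Real.sqrt (a i) ≤ 2 * M) :
    (∀ x : Fin k → ℝ, (∀ i, x i ∈ Set.Icc (-L) L) → 0 < ψ x) ∧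
    (∃ V : Set (Fin k → ℝ), IsOpen V ∧ {x | ∀ i, x i ∈ Set.Icc (-L) L} ⊆ V ∧
      (∀ x ∈ V, 0 < ψ x) ∧ ContDiffOn ℝ (⊤ : ℕ∞) (fun x => Real.sqrt (ψ x)) V) ∧
    (∀ x : Fin k → ℝ, (∀ i, x i ∈ Set.Icc (-L) L) →
      A ≤ |fderiv ℝ (fun y => Real.sqrt (ψ y)) x (Pi.single (⟨0, by omega⟩ : Fin k) 1)| ∧
      ∀ i : Fin k, i ≠ ⟨0, by omega⟩ →
        |fderiv ℝ (fun y => Real.sqrt (ψ y)) x (Pi.single (⟨0, by omega⟩ : Fin k) 1) *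
          fderiv ℝ (fun y => Real.sqrt (ψ y)) x (Pi.single i 1)| ≤ M) := by
  set i0 : Fin k := ⟨0, by omega⟩ with hi0
  set t₀ : ℝ := -2 * a i0 * L + b₁ with ht₀def
  set SL : ℝ := ∑ i ∈ Finset.univ.erase i0, a i * L ^ 2 with hSLdef
  have hSL0 : 0 ≤ SL := Finset.sum_nonneg fun i hi =>
    mul_nonneg (hai i (Finset.mem_erase.1 hi).1) (sq_nonneg L)
  have hQ0 : 0 ≤ 1 / (4 * a i0) * t₀ ^ 2 + SL := by positivity
  have ht₀pos : 0 < t₀ := lt_of_lt_of_le hrel1' hrel1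
  have h4a : (0:ℝ) < 4 * a i0 := by linarith
  have hexp : 4 * A ^ 2 * (1 / (4 * a i0) * t₀ ^ 2 + SL) * a i0
      = A ^ 2 * t₀ ^ 2 + 4 * a i0 * A ^ 2 * SL := by
    field_simp
  have hkey0 : 4 * A ^ 2 * (1 / (4 * a i0) * t₀ ^ 2 + SL) ≤ t₀ ^ 2 :=
    aux_sq A t₀ _ hQ0 hrel1 hrel1'
  have hc1 : A ^ 2 * t₀ ^ 2 + 4 * a i0 * A ^ 2 * SL ≤ a i0 * t₀ ^ 2 := by
    have h := mul_le_mul_of_nonneg_right hkey0 ha1.le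
    rw [hexp] at h
    linarith
  have haA : A ^ 2 ≤ a i0 := aux_haA A t₀ SL (a i0) hc1 hSL0 ht₀pos ha1 (by linarith)
  have hψeq : ∀ x : Fin k → ℝ,
      (α₀ + (∑ i, a i * x i ^ 2) + b₁ * x i0) * (4 * a i0)
        = (2 * a i0 * x i0 + b₁) ^ 2 + 4 * a i0 * ∑ i ∈ Finset.univ.erase i0, a i * x i ^ 2 := by
    intro x
    rw [← Finset.add_sum_erase Finset.univ (fun i => a i * x i ^ 2) (Finset.mem_univ i0)]
    linear_combination hrel0
  have hSx0 : ∀ x : Fin k → ℝ, 0 ≤ ∑ i ∈ Finset.univ.erase i0, a i * x i ^ 2 := by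
    intro x
    exact Finset.sum_nonneg fun i hi =>
      mul_nonneg (hai i (Finset.mem_erase.1 hi).1) (sq_nonneg (x i))
  have hψpos : ∀ x : Fin k → ℝ, (∀ i, x i ∈ Set.Icc (-L) L) →
      0 < α₀ + (∑ i, a i * x i ^ 2) + b₁ * x i0 := by
    intro x hx
    obtain ⟨P, hP⟩ : ∃ P, P = α₀ + (∑ i, a i * x i ^ 2) + b₁ * x i0 := ⟨_, rfl⟩
    obtain ⟨S, hS⟩ : ∃ S, S = ∑ i ∈ Finset.univ.erase i0, a i * x i ^ 2 := ⟨_, rfl⟩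
    obtain ⟨t, ht⟩ : ∃ t, t = 2 * a i0 * x i0 + b₁ := ⟨_, rfl⟩
    have hPt : P * (4 * a i0) = t ^ 2 + 4 * a i0 * S := by
      rw [hP, hS, ht]; exact hψeq x
    have hS0 : 0 ≤ S := hS ▸ hSx0 x
    have h5 : 0 ≤ a i0 * (x i0 + L) := mul_nonneg ha1.le (by linarith [(hx i0).1])
    have htx : t₀ ≤ t := by rw [ht, ht₀def]; nlinarith [h5]
    rw [← hP]
    exact aux_pos P S t t₀ (a i0) hPt htx ht₀pos hS0 ha1
  have hxi : ∀ i : Fin k, ContDiff ℝ (⊤ : WithTop ℕ∞) (fun x : Fin k → ℝ => x i) := fun i =>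
    (ContinuousLinearMap.proj (R := ℝ) (φ := fun _ : Fin k => ℝ) i).contDiff
  have hsm : ContDiff ℝ (⊤ : WithTop ℕ∞)
      (fun x : Fin k → ℝ => α₀ + (∑ i, a i * x i ^ 2) + b₁ * x i0) :=
    (contDiff_const.add (ContDiff.sum fun i _ => contDiff_const.mul ((hxi i).pow 2))).add
      (contDiff_const.mul (hxi i0))
  clear_value i0 t₀ SL
  subst hψ
  refine ⟨fun x hx => hψpos x hx,
    ⟨{x | 0 < α₀ + (∑ i, a i * x i ^ 2) + b₁ * x i0},
      isOpen_lt continuous_const hsm.continuous, fun x hx => hψpos x hx,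
      fun x hx => hx, fun x hx => ?_⟩, ?_⟩
  · have h := ((Real.contDiffAt_sqrt (ne_of_gt hx)).comp x hsm.contDiffAt)
    rw [Function.comp_def] at h
    exact h.contDiffWithinAt.of_le le_top
  · intro x hx
    have hpos := hψpos x hx
    rw [fderiv_sqrt_quadratic α₀ b₁ a i0 x hpos i0, if_pos rfl]
    obtain ⟨P, hP⟩ : ∃ P, P = α₀ + (∑ i, a i * x i ^ 2) + b₁ * x i0 := ⟨_, rfl⟩
    obtain ⟨S, hS⟩ : ∃ S, S = ∑ i ∈ Finset.univ.erase i0, a i * x i ^ 2 := ⟨_, rfl⟩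
    obtain ⟨t, ht⟩ : ∃ t, t = 2 * a i0 * x i0 + b₁ := ⟨_, rfl⟩
    obtain ⟨s, hsd⟩ : ∃ s, s = Real.sqrt (α₀ + (∑ i, a i * x i ^ 2) + b₁ * x i0) := ⟨_, rfl⟩
    have hP0 : 0 < P := hP ▸ hpos
    have hPt : P * (4 * a i0) = t ^ 2 + 4 * a i0 * S := by
      rw [hP, hS, ht]; exact hψeq x
    have hS0 : 0 ≤ S := hS ▸ hSx0 x
    have hSx : S ≤ SL := by
      rw [hS, hSLdef]
      exact Finset.sum_le_sum fun i hi =>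
        mul_le_mul_of_nonneg_left (sq_le_sq' (hx i).1 (hx i).2)
          (hai i (Finset.mem_erase.1 hi).1)
    have h5 : 0 ≤ a i0 * (x i0 + L) := mul_nonneg ha1.le (by linarith [(hx i0).1])
    have htx : t₀ ≤ t := by rw [ht, ht₀def]; nlinarith [h5]
    have htpos : 0 < t := lt_of_lt_of_le ht₀pos htx
    have ht2 : t₀ ^ 2 ≤ t ^ 2 := pow_le_pow_left₀ ht₀pos.le htx 2
    have hs0 : 0 < s := by rw [hsd]; exact Real.sqrt_pos.2 hpos
    have hsP : Real.sqrt P = s := by rw [hsd, hP]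
    have hs2 : s ^ 2 = P := by
      rw [← hsP]
      exact Real.sq_sqrt hP0.le
    have hABase : 4 * A ^ 2 * P ≤ t ^ 2 :=
      aux_ABase A t t₀ P S SL (a i0) hc1 haA ht2 hSx hPt ha1 (by linarith)
    constructor
    · rw [← ht, ← hP, hsP]
      have h2As : 2 * A * s ≤ t := aux_2As A s t P hABase hs2 hs0 htpos (by linarith)
      have h2s : (0:ℝ) < 2 * s := by linarith
      rw [abs_of_pos (div_pos htpos h2s), le_div_iff₀ h2s]
      linarith
    · intro i hi
      rw [fderiv_sqrt_quadratic α₀ b₁ a i0 x hpos i, if_neg hi, ← ht, ← hP, hsP]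
      have hai' : 0 ≤ a i := hai i hi
      obtain ⟨p, hpd⟩ : ∃ p, p = Real.sqrt (a i0) := ⟨_, rfl⟩
      obtain ⟨q, hqd⟩ : ∃ q, q = Real.sqrt (a i) := ⟨_, rfl⟩
      have hp2 : p ^ 2 = a i0 := by rw [hpd]; exact Real.sq_sqrt ha1.le
      have hq2 : q ^ 2 = a i := by rw [hqd]; exact Real.sq_sqrt hai'
      have hppos : 0 < p := by rw [hpd]; exact Real.sqrt_pos.2 ha1
      have hq0 : 0 ≤ q := by rw [hqd]; exact Real.sqrt_nonneg _
      have hpq : p * q ≤ 2 * M := by rw [hpd, hqd]; exact hrel2 i hi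
      have hSxi : a i * x i ^ 2 ≤ S := by
        rw [hS]
        exact Finset.single_le_sum (f := fun j => a j * x j ^ 2)
          (fun j hj => mul_nonneg (hai j (Finset.mem_erase.1 hj).1) (sq_nonneg (x j)))
          (Finset.mem_erase.2 ⟨hi, Finset.mem_univ i⟩)
      have step3 : a i * (t * |x i|) ≤ 2 * M * P :=
        aux_prod p q t P S (|x i|) M (a i0) (a i) hp2 hq2 hppos hq0 hpq hPt
          (by rw [sq_abs]; exact hSxi) (abs_nonneg _) hP0 htpos
      have heq : t / (2 * s) * ((2 * a i * x i + 0) / (2 * s))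
          = t * (a i * x i) / (2 * P) := by
        rw [← hs2]
        field_simp
        ring
      have h2P : (0:ℝ) < 2 * P := by linarith
      rw [heq, abs_div, abs_of_pos h2P, abs_mul, abs_of_pos htpos, abs_mul,
        abs_of_nonneg hai', div_le_iff₀ h2P]
      linarith [step3]
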